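/- arXiv:2012.02623 — 2 statements merged into one kernel-verified Lean document; each statement's English description precedes it below -/
import Mathlib

section
/- For all n ≥ 1 and 0 ≤ k ≤ n-1, the number of k-left obstructed (n,n)-parking functions is |LPF(n, n+k; k)| = (k+1)(k+n+1)^{n-1}. -/
/-- The first unoccupied spot `s` with `p ≤ s ≤ n`, if any. -/
def forwardSpot (n : ℕ) (occ : Finset ℕ) (p : ℕ) : Option ℕ :=
  (List.range' p (n + 1 - p)).find? (fun s => decide (s ∉ occ))

/-- Classical (forward-only) parking process: cars park one by one, each at the
first free spot `≥` its preference; returns the final occupied set if all park. -/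
def classicalPark (n : ℕ) : List ℕ → Finset ℕ → Option (Finset ℕ)
  | [], occ => some occ
  | p :: rest, occ =>
    match forwardSpot n occ p with
    | none => none
    | some s => classicalPark n rest (insert s occ)

/-- Backward candidates `p-1, p-2, …, p-k` that are at least `1`. -/
def backwardCandidates (k p : ℕ) : List ℕ :=
  ((List.range k).map (fun i => p - (i + 1))).filter (fun s => decide (1 ≤ s))

/-- The spot where a car with preference `p` parks under the `k`-Naples rule. -/
def naplesSpot (n k : ℕ) (occ : Finset ℕ) (p : ℕ) : Option ℕ :=
  if p ∈ occ then
    match (backwardCandidates k p).find? (fun s => decide (s ∉ occ)) with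
    | some s => some s
    | none => forwardSpot n occ p
  else some p

/-- `k`-Naples parking process; returns the final occupied set if all cars park. -/
def naplesPark (n k : ℕ) : List ℕ → Finset ℕ → Option (Finset ℕ)
  | [], occ => some occ
  | p :: rest, occ =>
    match naplesSpot n k occ p with
    | none => none
    | some s => naplesPark n k rest (insert s occ)

/-- All cars park under the `k`-Naples rule and no car with preference `p ≤ k`
finds all of `1, …, p` occupied (no car exits the lot searching backward). -/
def naplesContainedAux (n k : ℕ) : List ℕ → Finset ℕ → Bool
  | [], _ => true
  | p :: rest, occ =>
    (decide (p ≤ k → ¬ Finset.Icc 1 p ⊆ occ)) &&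
    match naplesSpot n k occ p with
    | none => false
    | some s => naplesContainedAux n k rest (insert s occ)

/-- The (1-based) preference list of `a : Fin m → Fin n`. -/
def prefList {m n : ℕ} (a : Fin m → Fin n) : List ℕ :=
  (List.ofFn a).map (fun x => (x : ℕ) + 1)

/-- The set of classical `(m,n)`-parking functions. -/
def PFset (m n : ℕ) : Finset (Fin m → Fin n) :=
  Finset.univ.filter (fun a => (classicalPark n (prefList a) ∅).isSome)

/-- The set of `k`-Naples `(m,n)`-parking functions. -/
def NPFset (m n k : ℕ) : Finset (Fin m → Fin n) :=
  Finset.univ.filter (fun a => (naplesPark n k (prefList a) ∅).isSome)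

/-- The set of contained `k`-Naples `(m,n)`-parking functions. -/
def Bset (m n k : ℕ) : Finset (Fin m → Fin n) :=
  Finset.univ.filter (fun a => naplesContainedAux n k (prefList a) ∅)

/-- The set of `k`-left obstructed `(m,n)`-parking functions: `m` cars on
`n + k` spots whose first `k` spots are obstructed, forward-only rule. -/
def LPFset (m n k : ℕ) : Finset (Fin m → Fin (n + k)) :=
  Finset.univ.filter (fun a => (classicalPark (n + k) (prefList a) (Finset.Icc 1 k)).isSome)

/-!
Counting free spots shows that the cars park iff for every `s` at most as many cars prefer a
spot `≥ s` as there are free spots `≥ s`. For `n` cars the obstructed spots only matter for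
`s ≤ k`, where there is room for all `n` cars anyway, so `LPF(n, n+k; k)` is the set of
classical `(n, n+k)`-parking functions.

These are counted by Pollak's argument. Add one spot and close the street into a circle of
`m = n + k + 1` spots. Every preference sequence on the circle leaves exactly `m - n` spots
free (the cycle lemma: free spots are the records of a walk with drift `m - n` per period),
rotating all preferences rotates the free spots, and a sequence is a parking function iff the
added spot stays free. Hence `m · |PF| = (m - n) · m ^ n`.
-/

open Finset

section ClassicalParking

variable {N : ℕ} {occ : Finset ℕ} {p s₀ : ℕ}

lemma forwardSpot_eq_none_iff : forwardSpot N occ p = none ↔ Icc p N ⊆ occ := by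
  simp only [forwardSpot, List.find?_eq_none, List.mem_range'_1, decide_eq_true_eq, not_not,
    subset_iff, mem_Icc]
  exact forall_congr' fun s => by constructor <;> intro h hs <;> exact h (by omega)

lemma forwardSpot_eq_some (h : forwardSpot N occ p = some s₀) :
    s₀ ∈ Icc p N \ occ ∧ Ico p s₀ ⊆ occ := by
  simp only [forwardSpot, List.find?_range'_eq_some, List.mem_range'_1, decide_eq_true_eq,
    Bool.not_eq_true', decide_eq_false_iff_not, not_not] at h
  obtain ⟨hs₀, ⟨hps₀, hs₀N⟩, hocc⟩ := h
  exact ⟨mem_sdiff.mpr ⟨mem_Icc.mpr ⟨hps₀, by omega⟩, hs₀⟩, fun s hs => hocc s (mem_Ico.mp hs).1 (mem_Ico.mp hs).2⟩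

lemma card_Icc_sdiff_insert (hs₀ : s₀ ∈ Icc p N \ occ) (s : ℕ) :
    #(Icc s N \ insert s₀ occ) + (if s ≤ s₀ then 1 else 0) = #(Icc s N \ occ) := by
  simp only [mem_sdiff, mem_Icc] at hs₀
  rw [sdiff_insert]
  split_ifs with hs
  · exact card_erase_add_one (by simp [hs, hs₀])
  · rw [erase_eq_of_notMem fun h => hs (mem_Icc.mp (mem_sdiff.mp h).1).1, add_zero]

lemma Icc_sdiff_eq_of_Ico_subset {s : ℕ} (hocc : Ico p s ⊆ occ) (hps : p ≤ s) :
    Icc s N \ occ = Icc p N \ occ := by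
  ext x
  simp only [mem_sdiff, mem_Icc]
  constructor
  · rintro ⟨⟨hsx, hxN⟩, hx⟩
    exact ⟨⟨by omega, hxN⟩, hx⟩
  · rintro ⟨⟨hpx, hxN⟩, hx⟩
    exact ⟨⟨not_lt.mp fun hxs => hx (hocc (mem_Ico.mpr ⟨hpx, hxs⟩)), hxN⟩, hx⟩

def HasRoom (N : ℕ) (occ : Finset ℕ) (l : List ℕ) : Prop :=
  ∀ s, l.countP (s ≤ ·) ≤ #(Icc s N \ occ)

lemma not_hasRoom_cons (h : Icc p N ⊆ occ) (l : List ℕ) : ¬HasRoom N occ (p :: l) := fun H => by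
  have := H p
  simp [sdiff_eq_empty_iff_subset.mpr h] at this

lemma hasRoom_insert_iff (hs₀ : s₀ ∈ Icc p N \ occ) (hocc : Ico p s₀ ⊆ occ) (l : List ℕ) :
    HasRoom N (insert s₀ occ) l ↔ HasRoom N occ (p :: l) := by
  have hps₀ : p ≤ s₀ := (mem_Icc.mp (mem_sdiff.mp hs₀).1).1
  have hfree := card_Icc_sdiff_insert hs₀
  have hmono (s : ℕ) (hps : p ≤ s) : l.countP (s ≤ ·) ≤ l.countP (p ≤ ·) :=
    List.countP_mono_left fun x _ hx => by simp only [decide_eq_true_eq] at hx ⊢; omega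
  simp only [HasRoom, List.countP_cons, decide_eq_true_eq]
  constructor
  · intro H s
    have := H s
    have := hfree s
    split_ifs at * <;> omega
  · intro H s
    have := hfree s
    by_cases hsp : s ≤ p
    · have := H s
      simp only [hsp, le_trans hsp hps₀, if_true] at *
      omega
    by_cases hss : s ≤ s₀
    -- every spot in `[p, s₀)` is taken, so for `p < s ≤ s₀` the free spots `≥ s` are those `≥ p`
    · have := H p
      have := hmono s (by omega)
      rw [Icc_sdiff_eq_of_Ico_subset (hocc.trans' (Ico_subset_Ico_right hss)) (by omega)] at *
      simp only [hss, le_refl, if_true] at *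
      omega
    · have := H s
      simp only [hsp, hss, if_false] at *
      omega

theorem classicalPark_isSome_iff (l : List ℕ) (occ : Finset ℕ) :
    (classicalPark N l occ).isSome ↔ HasRoom N occ l := by
  induction l generalizing occ with
  | nil => simp [classicalPark, HasRoom]
  | cons p rest ih =>
    rw [classicalPark]
    cases h : forwardSpot N occ p with
    | none => simpa using not_hasRoom_cons (forwardSpot_eq_none_iff.mp h) rest
    | some s₀ =>
      obtain ⟨hs₀, hocc⟩ := forwardSpot_eq_some h
      exact (ih _).trans (hasRoom_insert_iff hs₀ hocc rest)

end ClassicalParking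

section Obstruction

variable {m n k N : ℕ}

lemma countP_prefList (a : Fin m → Fin N) (s : ℕ) :
    (prefList a).countP (s ≤ ·) = #{i | s ≤ (a i : ℕ) + 1} := by
  rw [card_filter]
  simp [prefList, List.countP_flatMap, List.map_ofFn, List.sum_ofFn, List.countP_cons]

lemma mem_PFset_iff {a : Fin m → Fin N} :
    a ∈ PFset m N ↔ ∀ s, #{i | s ≤ (a i : ℕ) + 1} ≤ N + 1 - s := by
  simp [PFset, classicalPark_isSome_iff, HasRoom, countP_prefList]

lemma mem_LPFset_iff {a : Fin m → Fin (n + k)} :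
    a ∈ LPFset m n k ↔ ∀ s, #{i | s ≤ (a i : ℕ) + 1} ≤ #(Icc s (n + k) \ Icc 1 k) := by
  simp [LPFset, classicalPark_isSome_iff, HasRoom, countP_prefList]

theorem LPFset_eq_PFset (h : m ≤ n) : LPFset m n k = PFset m (n + k) := by
  ext a
  rw [mem_LPFset_iff, mem_PFset_iff]
  refine forall_congr' fun s => ?_
  have hcars : #{i | s ≤ (a i : ℕ) + 1} ≤ m := (card_filter_le _ _).trans_eq (card_fin m)
  by_cases hsk : s ≤ k
  · have hfree : Icc (k + 1) (n + k) ⊆ Icc s (n + k) \ Icc 1 k := fun x hx => by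
      simp only [mem_Icc, mem_sdiff] at hx ⊢; omega
    have := card_le_card hfree
    simp only [Nat.card_Icc] at this
    exact iff_of_true (by omega) (by omega)
  · rw [sdiff_eq_self_of_disjoint (disjoint_left.mpr fun x hx hx' => by
      simp only [mem_Icc] at hx hx'; omega), Nat.card_Icc]

end Obstruction

section Records

variable {W : ℕ → ℤ} {m d : ℕ}

def runningMax (W : ℕ → ℤ) (x : ℕ) : ℤ := (range (x + 1)).sup' nonempty_range_add_one W

def IsRecord (W : ℕ → ℤ) (T : ℕ) : Prop := ∀ u ≤ T, W u < W (T + 1)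

lemma le_runningMax {u x : ℕ} (h : u ≤ x) : W u ≤ runningMax W x :=
  le_sup' W (mem_range.mpr (Nat.lt_succ_of_le h))

lemma exists_eq_runningMax (x : ℕ) : ∃ u ≤ x, W u = runningMax W x := by
  obtain ⟨u, hu, he⟩ := exists_mem_eq_sup' (nonempty_range_add_one (n := x)) W
  exact ⟨u, Nat.lt_succ_iff.mp (mem_range.mp hu), he.symm⟩

lemma runningMax_succ (x : ℕ) : runningMax W (x + 1) = max (runningMax W x) (W (x + 1)) := by
  simp [runningMax, range_add_one (n := x + 1), sup'_insert, max_comm]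

lemma runningMax_succ_of_isRecord (hstep : ∀ x, W (x + 1) ≤ W x + 1) {T : ℕ}
    (h : IsRecord W T) : runningMax W (T + 1) = runningMax W T + 1 := by
  obtain ⟨u, hu, he⟩ := exists_eq_runningMax (W := W) T
  have := h u hu
  have := hstep T
  have := le_runningMax (W := W) (le_refl T)
  rw [runningMax_succ]
  omega

lemma runningMax_succ_of_not_isRecord {T : ℕ} (h : ¬IsRecord W T) :
    runningMax W (T + 1) = runningMax W T := by
  obtain ⟨u, hu, hW⟩ := not_forall₂.mp h
  rw [runningMax_succ, max_eq_left ((not_lt.mp hW).trans (le_runningMax hu))]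

lemma runningMax_two_mul (hper : ∀ x, W (x + m) = W x + d) :
    runningMax W (m + m) = runningMax W m + d := by
  refine le_antisymm (sup'_le _ _ fun u hu => ?_) ?_
  · rcases le_or_gt u m with hum | hmu
    · have := le_runningMax (W := W) hum
      omega
    · obtain ⟨v, rfl⟩ := Nat.exists_eq_add_of_le hmu.le
      rw [add_comm, hper]
      have := le_runningMax (W := W) (x := m) (u := v) (by rw [mem_range] at hu; omega)
      omega
  · obtain ⟨u, hu, he⟩ := exists_eq_runningMax (W := W) m
    rw [← he, ← hper]
    exact le_runningMax (by omega)

/-- Over one period the running maximum grows by `d`, one unit at each record. -/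
theorem card_isRecord (hstep : ∀ x, W (x + 1) ≤ W x + 1) (hper : ∀ x, W (x + m) = W x + d)
    [DecidablePred (IsRecord W)] : #{t ∈ range m | IsRecord W (t + m)} = d := by
  have hinc (t : ℕ) : (if IsRecord W (t + m) then (1 : ℤ) else 0)
      = runningMax W (t + 1 + m) - runningMax W (t + m) := by
    rw [add_right_comm]
    split_ifs with h
    · rw [runningMax_succ_of_isRecord hstep h]; ring
    · rw [runningMax_succ_of_not_isRecord h]; ring
  have := Finset.sum_range_sub (fun t => runningMax W (t + m)) m
  simp only [← hinc, sum_boole, zero_add, runningMax_two_mul hper] at this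
  omega

lemma le_add_mul_of_periodic (hper : ∀ x, W (x + m) = W x + d) (u q : ℕ) :
    W u ≤ W (u + q * m) := by
  induction q with
  | zero => simp
  | succ q ih => rw [add_mul, one_mul, ← add_assoc, hper]; omega

lemma isRecord_iff_of_periodic (hm : 0 < m) (hper : ∀ x, W (x + m) = W x + d) {T : ℕ} :
    IsRecord W T ↔ ∀ u ≤ T, T < u + m → W u < W (T + 1) := by
  refine ⟨fun h u hu _ => h u hu, fun h u hu => ?_⟩
  have hlift := le_add_mul_of_periodic hper u ((T - u) / m)
  have := Nat.div_add_mod' (T - u) m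
  have := Nat.mod_lt (T - u) hm
  have := h (u + (T - u) / m * m) (by omega) (by omega)
  omega

end Records

section Circle

variable {n m : ℕ}

/-- Spot `t` stays empty when the cars park on the circle `Fin m` iff every arc of `j + 1` spots
ending at `t` is preferred by at most `j` cars; we take this arc condition as the definition. -/
def IsFreeSpot (c : Fin n → Fin m) (t : Fin m) : Prop := ∀ j : Fin m, #{i | t - c i ≤ j} ≤ j

instance (c : Fin n → Fin m) : DecidablePred (IsFreeSpot c) := fun t => by
  unfold IsFreeSpot; infer_instance

lemma isFreeSpot_add_const [NeZero m] (c : Fin n → Fin m) (t r : Fin m) :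
    IsFreeSpot (c + fun _ => r) (t + r) ↔ IsFreeSpot c t := by
  simp [IsFreeSpot, add_sub_add_right_eq_sub]

lemma card_filter_isFreeSpot_eq [NeZero m] (t t' : Fin m) :
    #{c : Fin n → Fin m | IsFreeSpot c t} = #{c : Fin n → Fin m | IsFreeSpot c t'} :=
  card_equiv (Equiv.addRight fun _ => t' - t) fun c => by
    simp [← isFreeSpot_add_const c t (t' - t)]

lemma val_sub_eq_iff [NeZero m] {t x : Fin m} {d : ℕ} (hd : d < m) :
    ((t - x : Fin m) : ℕ) = d ↔ (x : ℕ) = (t + m - d) % m :=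
  calc ((t - x : Fin m) : ℕ) = d ↔ t - x = ⟨d, hd⟩ :=
      (Fin.ext_iff (a := t - x) (b := ⟨d, hd⟩)).symm
    _ ↔ x = t - ⟨d, hd⟩ := by rw [sub_eq_iff_eq_add, eq_sub_iff_add_eq, add_comm, eq_comm]
    _ ↔ (x : ℕ) = (t + m - d) % m := by
      rw [Fin.ext_iff, Fin.val_sub, show m - d + t = t + m - d by omega]

def prefCount (c : Fin n → Fin m) (y : ℕ) : ℕ := #{i | (c i : ℕ) = y % m}

def walk (c : Fin n → Fin m) (x : ℕ) : ℤ := x - ∑ y ∈ range x, prefCount c y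

variable (c : Fin n → Fin m)

lemma walk_succ_le (x : ℕ) : walk c (x + 1) ≤ walk c x + 1 := by
  simp only [walk, sum_range_succ]
  push_cast
  omega

lemma sum_range_prefCount : ∑ y ∈ range m, prefCount c y = n := by
  have := card_eq_sum_card_fiberwise (s := univ) (f := fun i => (c i : ℕ)) (t := range m)
    fun i _ => mem_range.mpr (c i).isLt
  rw [card_univ, Fintype.card_fin] at this
  refine Eq.trans (sum_congr rfl fun y hy => ?_) this.symm
  simp [prefCount, Nat.mod_eq_of_lt (mem_range.mp hy)]

lemma walk_add_period (h : n ≤ m) (x : ℕ) : walk c (x + m) = walk c x + (m - n : ℕ) := by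
  have hshift (y : ℕ) : prefCount c (m + y) = prefCount c y := by simp [prefCount]
  simp only [walk, add_comm x m, sum_range_add, hshift, sum_range_prefCount]
  push_cast [h]
  ring

lemma walk_sub_walk {a b : ℕ} (h : a ≤ b) :
    walk c b = walk c a + (b - a : ℕ) - ∑ y ∈ Ico a b, prefCount c y := by
  simp only [walk, ← sum_range_add_sum_Ico _ h]
  push_cast [h]
  ring

lemma card_arc [NeZero m] (t j : Fin m) :
    #{i | t - c i ≤ j} = ∑ y ∈ Ico (t + m - j : ℕ) (t + m + 1), prefCount c y := by
  have hj := j.isLt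
  rw [card_eq_sum_card_fiberwise (f := fun i => ((t - c i : Fin m) : ℕ)) (t := Ico 0 (j + 1))
    fun i hi => by simpa [Nat.lt_succ_iff] using hi]
  have hrefl := sum_Ico_reflect (prefCount c) 0 (m := j + 1) (n := t + m) (by omega)
  rw [show (t + m + 1 - (j + 1) : ℕ) = t + m - j by omega, Nat.sub_zero] at hrefl
  rw [← hrefl]
  refine sum_congr rfl fun d hd => ?_
  have hdj : d < j + 1 := (mem_Ico.mp hd).2
  simp only [prefCount]
  congr 1
  ext i
  simp only [mem_filter, mem_univ, true_and, ← val_sub_eq_iff (by omega : d < m)]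
  exact ⟨And.right, fun h => ⟨Fin.le_def.mpr (by omega), h⟩⟩

lemma isFreeSpot_iff_isRecord [NeZero m] (h : n ≤ m) (t : Fin m) :
    IsFreeSpot c t ↔ IsRecord (walk c) (t + m) := by
  have hm := Nat.pos_of_neZero m
  have hstep (j : Fin m) : walk c (t + m + 1) = walk c (t + m - j) + (j + 1)
      - ∑ y ∈ Ico (t + m - j : ℕ) (t + m + 1), prefCount c y := by
    rw [walk_sub_walk c (by omega : t + m - j ≤ t + m + 1)]
    push_cast [show t + m + 1 - (t + m - j) = (j + 1 : ℕ) by omega]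
    ring
  rw [isRecord_iff_of_periodic hm (walk_add_period c h)]
  simp only [IsFreeSpot, card_arc]
  constructor
  · intro H u hu hlt
    have hj := hstep ⟨t + m - u, by omega⟩
    have := H ⟨t + m - u, by omega⟩
    simp only [show t + m - (t + m - u) = u by omega] at hj this
    omega
  · intro H j
    have := H (t + m - j) (by omega) (by omega)
    have := hstep j
    omega

/-- The cycle lemma: the free spots are the records of the walk over one period. -/
theorem card_isFreeSpot [NeZero m] : #{t | IsFreeSpot c t} = m - n := by
  by_cases h : n ≤ m
  · classical
    rw [← card_isRecord (walk_succ_le c) (walk_add_period c h)]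
    simp only [card_filter, isFreeSpot_iff_isRecord c h]
    exact Fin.sum_univ_eq_sum_range (fun t => if IsRecord (walk c) (t + m) then 1 else 0) m
  · have hm := Nat.pos_of_neZero m
    have hnone (t : Fin m) : ¬IsFreeSpot c t := fun ht => by
      have := ht ⟨m - 1, by omega⟩
      rw [filter_true_of_mem fun i _ => Fin.le_def.mpr (Nat.le_sub_one_of_lt (t - c i).isLt), card_univ,
        Fintype.card_fin] at this
      omega
    simp only [hnone, filter_false, card_empty]
    omega

theorem mul_card_filter_isFreeSpot [NeZero m] (t : Fin m) :
    m * #{c : Fin n → Fin m | IsFreeSpot c t} = (m - n) * m ^ n := by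
  calc m * #{c : Fin n → Fin m | IsFreeSpot c t}
      = ∑ t' : Fin m, #{c : Fin n → Fin m | IsFreeSpot c t'} := by
        simp [card_filter_isFreeSpot_eq _ t]
    _ = ∑ c : Fin n → Fin m, #{t' | IsFreeSpot c t'} := by
        simp only [card_filter]; exact sum_comm
    _ = (m - n) * m ^ n := by simp [card_isFreeSpot, mul_comm]

end Circle

section ParkingFunctions

variable {n N : ℕ}

-- `Fin.last N` is the spot added to close the street into a circle.
lemma mem_PFset_iff_isFreeSpot {a : Fin n → Fin N} :
    a ∈ PFset n N ↔ IsFreeSpot (Fin.castSucc ∘ a) (Fin.last N) := by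
  have hval (i : Fin n) : ((Fin.last N - (a i).castSucc : Fin (N + 1)) : ℕ) = N - a i :=
    Fin.coe_sub_iff_le.mpr (Fin.le_last _)
  have hlt (i : Fin n) := (a i).isLt
  simp only [mem_PFset_iff, IsFreeSpot, Function.comp_apply, Fin.le_def, hval]
  constructor
  · intro H j
    have := H (N + 1 - j)
    rw [show N + 1 - (N + 1 - j) = (j : ℕ) by omega] at this
    rwa [filter_congr fun i _ => (by omega : N - a i ≤ j ↔ N + 1 - j ≤ a i + 1)]
  · intro H s
    rcases Nat.lt_or_ge N s with hNs | hsN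
    · simp [filter_false_of_mem fun i _ => (by omega : ¬s ≤ a i + 1)]
    rcases Nat.eq_zero_or_pos s with rfl | hs
    · have := H (Fin.last N)
      simp only [Fin.val_last, filter_true_of_mem fun i _ => (by omega : N - a i ≤ N)] at this
      simpa using this.trans (Nat.le_succ N)
    · have := H ⟨N + 1 - s, by omega⟩
      simp only at this
      rwa [filter_congr fun i _ => (by omega : N - a i ≤ N + 1 - s ↔ s ≤ a i + 1)] at this

lemma card_PFset_eq_card_isFreeSpot :
    #(PFset n N) = #{c : Fin n → Fin (N + 1) | IsFreeSpot c (Fin.last N)} := by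
  refine card_bij (fun a _ => Fin.castSucc ∘ a) (fun a ha => ?_)
    (fun a _ b _ h => Fin.castSucc_injective N |>.comp_left h) fun c hc => ?_
  · simpa using mem_PFset_iff_isFreeSpot.mp ha
  · rw [mem_filter] at hc
    have hne (i : Fin n) : c i ≠ Fin.last N := fun hi => by
      have := hc.2 0
      simp only [Fin.val_zero, Nat.le_zero, card_eq_zero, filter_eq_empty_iff] at this
      exact this (mem_univ i) (by simp [hi])
    refine ⟨fun i => (c i).castPred (hne i), mem_PFset_iff_isFreeSpot.mpr ?_,
      funext fun i => Fin.castSucc_castPred _ _⟩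
    convert hc.2
    exact funext fun i => Fin.castSucc_castPred _ _

theorem card_PFset (hn : 1 ≤ n) : #(PFset n N) = (N + 1 - n) * (N + 1) ^ (n - 1) := by
  have := mul_card_filter_isFreeSpot (n := n) (Fin.last N)
  rw [← card_PFset_eq_card_isFreeSpot, ← pow_sub_one_mul (by omega : n ≠ 0), mul_comm _ (N + 1),
    mul_left_comm] at this
  exact Nat.eq_of_mul_eq_mul_left N.succ_pos this

end ParkingFunctions

theorem obstructed_count_general (n k : ℕ) (hn : 1 ≤ n) :
    (LPFset n n k).card = (k + 1) * (k + n + 1) ^ (n - 1) := by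
  rw [LPFset_eq_PFset le_rfl, card_PFset hn, add_comm k n,
    show n + k + 1 - n = k + 1 by omega]

theorem obstructed_count (n k : ℕ) (hn : 1 ≤ n) (hk : k ≤ n - 1) :
    (LPFset n n k).card = (k + 1) * (k + n + 1) ^ (n - 1) :=
  obstructed_count_general n k hn
end

section
/- For all n ≥ 1 and 0 ≤ k ≤ n-1, the number of k-Naples parking functions satisfies |PF_{n,k}| ≤ (k+1)(k+n+1)^{n-1}, with equality only if k = 0. -/
/-!
Under the `k`-Naples rule a car with preference `p` parks at a spot `s` with `p ≤ s + k`. Shift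
the Naples occupancy `k` spots to the right: at every moment, for every `q`, it has at least as
many occupied spots `≥ q` as classical forward parking with the same preferences on `n + k` spots.
Hence classical parking never gets stuck, and every `k`-Naples parking function is an
`(n, n + k)`-parking function. These are counted by Pollak's circle argument: on a circle of
`n + k + 1` spots every preference list parks, rotating the preferences rotates the outcome, and
exactly `k + 1` of the `n + k + 1` rotations leave spot `0` empty. For `k ≥ 1` the parking
function `i ↦ i + k` prefers a spot beyond `n`, so the inclusion is strict.
-/
open Finset

theorem List.find?_range'_eq_some_iff {q : ℕ → Bool} {a l x : ℕ} :
    (List.range' a l).find? q = some x ↔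
      a ≤ x ∧ x < a + l ∧ q x ∧ ∀ y, a ≤ y → y < x → q y = false := by
  rw [List.find?_eq_some_iff_getElem]
  constructor
  · rintro ⟨hqx, i, hi, rfl, hmin⟩
    simp only [List.length_range'] at hi
    refine ⟨by simp, by simp; omega, hqx, fun y hay hy => ?_⟩
    have := hmin (y - a) (by simp at hy; omega)
    simpa [show a + (y - a) = y by omega] using this
  · rintro ⟨hax, hxl, hqx, hmin⟩
    refine ⟨hqx, x - a, by simp; omega, by simp; omega, fun j hj => ?_⟩
    simpa using hmin (a + j) (by omega) (by omega)

lemma forwardSpot_eq_some_iff {n p s : ℕ} {occ : Finset ℕ} :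
    forwardSpot n occ p = some s ↔ p ≤ s ∧ s ≤ n ∧ s ∉ occ ∧ ∀ y, p ≤ y → y < s → y ∈ occ := by
  simp only [forwardSpot, List.find?_range'_eq_some_iff, decide_eq_true_eq,
    decide_eq_false_iff_not, not_not]
  constructor <;> rintro ⟨h1, h2, h3, h4⟩ <;> exact ⟨h1, by omega, h3, h4⟩

lemma Icc_subset_of_forwardSpot_eq_none {n p : ℕ} {occ : Finset ℕ}
    (h : forwardSpot n occ p = none) : Icc p n ⊆ occ := by
  intro y hy
  rw [forwardSpot, List.find?_eq_none] at h
  simpa using h y (by rw [List.mem_range'_1]; simp at hy; omega)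

lemma naplesSpot_spec {n k p s : ℕ} {occ : Finset ℕ} (hpn : p ≤ n)
    (h : naplesSpot n k occ p = some s) : s ∉ occ ∧ s ≤ n ∧ p ≤ s + k := by
  unfold naplesSpot at h
  split_ifs at h with hp
  · split at h
    · next t ht =>
      cases h
      obtain ⟨hmem, hone⟩ := List.mem_filter.1 (List.mem_of_find?_eq_some ht)
      obtain ⟨i, hi, rfl⟩ := List.mem_map.1 hmem
      simp only [List.mem_range, decide_eq_true_eq] at hi hone
      exact ⟨by simpa using List.find?_some ht, by omega, by omega⟩
    · obtain ⟨hps, hsn, hs, -⟩ := forwardSpot_eq_some_iff.1 h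
      exact ⟨hs, hsn, by omega⟩
  · cases h
    exact ⟨hp, hpn, by omega⟩

def TailDominated (C D : Finset ℕ) : Prop :=
  ∀ q, #{x ∈ C | q ≤ x} ≤ #{x ∈ D | q ≤ x}

lemma card_filter_le_eq_add (S : Finset ℕ) {p q : ℕ} (hpq : p ≤ q) :
    #{x ∈ S | p ≤ x} = #{x ∈ S | q ≤ x} + #(S ∩ Ico p q) := by
  rw [← card_union_of_disjoint]
  · congr 1
    ext x
    simp only [mem_filter, mem_union, mem_inter, mem_Ico]
    grind
  · rw [disjoint_left]
    intro x hx hx'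
    simp only [mem_filter, mem_inter, mem_Ico] at hx hx'
    omega

namespace TailDominated

variable {C D : Finset ℕ}

lemma insert (h : TailDominated C D) {p s t : ℕ} (hs : s ∉ C) (hgap : Ico p s ⊆ C)
    (ht : t ∉ D) (hpt : p ≤ t) : TailDominated (insert s C) (insert t D) := by
  intro q
  rw [filter_insert, filter_insert]
  by_cases hqt : q ≤ t
  · rw [if_pos hqt, card_insert_of_notMem (by simp [ht])]
    split_ifs
    · exact card_insert_le _ _ |>.trans (Nat.add_le_add_right (h q) 1)
    · exact (h q).trans (Nat.le_succ _)
  rw [if_neg hqt]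
  split_ifs with hqs
  · -- Here `t < q ≤ s`: `C` fills all of `[p, q)` while `D` misses `t ∈ [p, q)`, so the
    -- inequality at `p` is strict at `q`.
    rw [card_insert_of_notMem (by simp [hs])]
    have hC : #{x ∈ C | p ≤ x} = #{x ∈ C | q ≤ x} + (q - p) := by
      rw [card_filter_le_eq_add C (q := q) (by omega),
        inter_eq_right.2 ((Ico_subset_Ico_right hqs).trans hgap), Nat.card_Ico]
    have hD : #{x ∈ D | p ≤ x} ≤ #{x ∈ D | q ≤ x} + (q - p - 1) := by
      rw [card_filter_le_eq_add D (q := q) (by omega)]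
      gcongr
      calc #(D ∩ Ico p q) ≤ #((Ico p q).erase t) := card_le_card fun x hx => by
            simp only [mem_inter] at hx
            exact mem_erase.2 ⟨by rintro rfl; exact ht hx.1, hx.2⟩
        _ = q - p - 1 := by rw [card_erase_of_mem (by simp; omega), Nat.card_Ico]
    have := h p
    omega
  · exact h q

lemma not_Icc_subset (h : TailDominated C D) {p t M : ℕ} (hD : D ⊆ Iic M) (ht : t ∈ Icc p M)
    (htD : t ∉ D) : ¬ Icc p M ⊆ C := by
  intro hC
  have hCp : #(Icc p M) ≤ #{x ∈ C | p ≤ x} :=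
    card_le_card fun x hx => mem_filter.2 ⟨hC hx, (mem_Icc.1 hx).1⟩
  have hDp : #{x ∈ D | p ≤ x} ≤ #((Icc p M).erase t) := card_le_card fun x hx => by
    simp only [mem_filter] at hx
    exact mem_erase.2 ⟨by rintro rfl; exact htD hx.1, mem_Icc.2 ⟨hx.2, mem_Iic.1 (hD hx.1)⟩⟩
  rw [card_erase_of_mem ht] at hDp
  have := card_pos.2 ⟨t, ht⟩
  have := h p
  omega

end TailDominated

theorem classicalPark_isSome_of_naplesPark_isSome {n k : ℕ} :
    ∀ {L : List ℕ} {occN occC : Finset ℕ}, (∀ p ∈ L, p ≤ n) → occN ⊆ Iic n →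
      TailDominated occC (occN.image (· + k)) →
      (naplesPark n k L occN).isSome → (classicalPark (n + k) L occC).isSome
  | [], _, _, _, _, _, _ => rfl
  | p :: L, occN, occC, hL, hN, hdom, hpark => by
    rw [naplesPark] at hpark
    obtain ⟨s, hs⟩ : ∃ s, naplesSpot n k occN p = some s := by
      cases h : naplesSpot n k occN p
      · simp [h] at hpark
      · exact ⟨_, rfl⟩
    rw [hs] at hpark
    obtain ⟨hsN, hsn, hps⟩ := naplesSpot_spec (hL p List.mem_cons_self) hs
    have hshift : s + k ∉ occN.image (· + k) := by simpa using hsN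
    rw [classicalPark]
    cases hC : forwardSpot (n + k) occC p with
    | none =>
      refine absurd (Icc_subset_of_forwardSpot_eq_none hC) (hdom.not_Icc_subset ?_ ?_ hshift)
      · intro x hx
        obtain ⟨y, hy, rfl⟩ := mem_image.1 hx
        simpa using mem_Iic.1 (hN hy)
      · simp only [mem_Icc]; omega
    | some sC =>
      obtain ⟨-, -, hsC, hgap⟩ := forwardSpot_eq_some_iff.1 hC
      refine classicalPark_isSome_of_naplesPark_isSome
        (fun q hq => hL q (List.mem_cons_of_mem _ hq)) (insert_subset (mem_Iic.2 hsn) hN) ?_ hpark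
      rw [image_insert]
      exact hdom.insert hsC (fun y hy => hgap y (mem_Ico.1 hy).1 (mem_Ico.1 hy).2) hshift hps

lemma prefList_eq_ofFn {m n : ℕ} (a : Fin m → Fin n) :
    prefList a = List.ofFn fun i => (a i : ℕ) + 1 := by
  simp [prefList, ← List.map_eq_flatMap, List.map_ofFn, Function.comp_def]

lemma mem_Icc_of_mem_prefList {m n p : ℕ} {a : Fin m → Fin n} (hp : p ∈ prefList a) :
    p ∈ Icc 1 n := by
  obtain ⟨i, rfl⟩ := List.mem_ofFn.1 (prefList_eq_ofFn a ▸ hp)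
  simp only [mem_Icc]
  omega

lemma prefList_castLE_comp {m n N : ℕ} (h : n ≤ N) (a : Fin m → Fin n) :
    prefList (Fin.castLE h ∘ a) = prefList a := by
  simp [prefList_eq_ofFn]

lemma map_castLE_NPFset_subset_PFset (m n k : ℕ) :
    (NPFset m n k).map (Fin.castLEEmb (Nat.le_add_right n k)).arrowCongrRight ⊆
      PFset m (n + k) := by
  intro b hb
  obtain ⟨a, ha, rfl⟩ := mem_map.1 hb
  simp only [NPFset, PFset, mem_filter, mem_univ, true_and] at ha ⊢
  change (classicalPark (n + k) (prefList (Fin.castLE (Nat.le_add_right n k) ∘ a)) ∅).isSome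
  rw [prefList_castLE_comp]
  exact classicalPark_isSome_of_naplesPark_isSome
    (fun p hp => (mem_Icc.1 (mem_Icc_of_mem_prefList hp)).2) (empty_subset _) (fun _ => by simp) ha

def circSpot (M : ℕ) (occ : Finset (ZMod M)) (p : ZMod M) : Option (ZMod M) :=
  ((List.range M).map fun j : ℕ => p + (j : ZMod M)).find? (· ∉ occ)

def circPark (M : ℕ) : List (ZMod M) → Finset (ZMod M) → Option (Finset (ZMod M))
  | [], occ => some occ
  | p :: rest, occ =>
    match circSpot M occ p with
    | none => none
    | some s => circPark M rest (insert s occ)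

section Circular

variable {M : ℕ}

lemma notMem_of_circSpot_eq_some {occ : Finset (ZMod M)} {p s : ZMod M}
    (h : circSpot M occ p = some s) : s ∉ occ := by
  simpa using List.find?_some h

lemma circSpot_isSome [NeZero M] {occ : Finset (ZMod M)} (h : #occ < M) (p : ZMod M) :
    (circSpot M occ p).isSome := by
  obtain ⟨s, -, hs⟩ := exists_mem_notMem_of_card_lt_card (s := occ) (t := univ)
    (by rwa [card_univ, ZMod.card])
  rw [circSpot, List.find?_isSome]
  refine ⟨s, List.mem_map.2 ⟨(s - p).val, List.mem_range.2 (ZMod.val_lt _), ?_⟩, by simpa⟩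
  simp

lemma circSpot_add (c : ZMod M) (occ : Finset (ZMod M)) (p : ZMod M) :
    circSpot M (occ.image (· + c)) (p + c) = (circSpot M occ p).map (· + c) := by
  have hshift : (List.range M).map (fun j : ℕ => p + c + (j : ZMod M))
      = ((List.range M).map fun j : ℕ => p + (j : ZMod M)).map (· + c) := by
    simp [Function.comp_def, add_right_comm]
  rw [circSpot, circSpot, hshift, List.find?_map]
  congr 2
  funext x
  simp

lemma circPark_add (c : ZMod M) : ∀ (L : List (ZMod M)) (occ : Finset (ZMod M)),
    circPark M (L.map (· + c)) (occ.image (· + c)) = (circPark M L occ).map (image (· + c))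
  | [], _ => rfl
  | p :: L, occ => by
    simp only [List.map_cons, circPark, circSpot_add]
    cases circSpot M occ p with
    | none => rfl
    | some s =>
      have := circPark_add c L (insert s occ)
      rwa [image_insert] at this

lemma circPark_eq_some [NeZero M] : ∀ (L : List (ZMod M)) (occ : Finset (ZMod M)),
    #occ + L.length ≤ M → ∃ r, circPark M L occ = some r ∧ #r = #occ + L.length
  | [], occ, _ => ⟨occ, rfl, rfl⟩
  | p :: L, occ, h => by
    simp only [List.length_cons] at h
    obtain ⟨s, hs⟩ := Option.isSome_iff_exists.1 (circSpot_isSome (occ := occ) (by omega) p)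
    obtain ⟨r, hr, hcard⟩ := circPark_eq_some L (insert s occ)
      (by rw [card_insert_of_notMem (notMem_of_circSpot_eq_some hs)]; omega)
    refine ⟨r, by simp only [circPark, hs, hr], ?_⟩
    rw [hcard, card_insert_of_notMem (notMem_of_circSpot_eq_some hs), List.length_cons]
    omega

end Circular

open Classical in
def zeroFreeCircSet (m M : ℕ) [NeZero M] : Finset (Fin m → ZMod M) :=
  {v | ∃ r, circPark M (List.ofFn v) ∅ = some r ∧ (0 : ZMod M) ∉ r}

lemma add_const_mem_zeroFreeCircSet_iff {m M : ℕ} [NeZero M] {v : Fin m → ZMod M}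
    {r : Finset (ZMod M)} (hr : circPark M (List.ofFn v) ∅ = some r) (c : ZMod M) :
    (fun i => v i + c) ∈ zeroFreeCircSet m M ↔ -c ∉ r := by
  have hlist : List.ofFn (fun i => v i + c) = (List.ofFn v).map (· + c) := by
    simp [List.map_ofFn, Function.comp_def]
  have hpark := circPark_add c (List.ofFn v) ∅
  rw [image_empty, hr, ← hlist] at hpark
  simp [zeroFreeCircSet, hpark]

theorem card_mul_card_zeroFreeCircSet {m M : ℕ} [NeZero M] (hm : m ≤ M) :
    M * #(zeroFreeCircSet m M) = (M - m) * M ^ m := by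
  classical
  let R : ZMod M → (Fin m → ZMod M) → Prop :=
    fun c v => (fun i => v i + c) ∈ zeroFreeCircSet m M
  have hrow : ∀ c, #{v | R c v} = #(zeroFreeCircSet m M) := fun c =>
    card_equiv (Equiv.addRight fun _ => c) (by simp [R, Pi.add_def])
  have hcol : ∀ v, #{c | R c v} = M - m := by
    intro v
    obtain ⟨r, hr, hcard⟩ := circPark_eq_some (List.ofFn v) ∅ (by simpa)
    simp only [R, add_const_mem_zeroFreeCircSet_iff hr]
    rw [card_equiv (Equiv.neg _) (t := rᶜ) (by simp), card_compl, ZMod.card, hcard]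
    simp
  calc M * #(zeroFreeCircSet m M) = ∑ c : ZMod M, #{v | R c v} := by simp [hrow, ZMod.card]
    _ = ∑ v, #{c | R c v} := sum_card_bipartiteAbove_eq_sum_card_bipartiteBelow R
    _ = (M - m) * M ^ m := by simp [hcol, mul_comm]

lemma natCast_mem_image_natCast_iff {N x : ℕ} {occ : Finset ℕ} (hocc : occ ⊆ Iic N)
    (hx : x ≤ N) : (x : ZMod (N + 1)) ∈ occ.image Nat.cast ↔ x ∈ occ := by
  refine ⟨fun h => ?_, mem_image_of_mem _⟩
  obtain ⟨y, hy, hyx⟩ := mem_image.1 h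
  have hyN := mem_Iic.1 (hocc hy)
  rwa [CharP.natCast_injOn_Iio (ZMod (N + 1)) (N + 1) (Set.mem_Iio.2 (by omega))
    (Set.mem_Iio.2 (by omega)) hyx] at hy

lemma circSpot_natCast_of_forwardSpot {N p s : ℕ} {occ : Finset ℕ} (hocc : occ ⊆ Iic N)
    (h : forwardSpot N occ p = some s) :
    circSpot (N + 1) (occ.image Nat.cast) p = some (s : ZMod (N + 1)) := by
  obtain ⟨hps, hsN, hs, hgap⟩ := forwardSpot_eq_some_iff.1 h
  have hcast : ∀ j : ℕ, (p : ZMod (N + 1)) + j = ((p + j : ℕ) : ZMod (N + 1)) :=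
    fun j => (Nat.cast_add p j).symm
  have hfind : (List.range' 0 (N + 1)).find?
      (fun j : ℕ => decide (((p + j : ℕ) : ZMod (N + 1)) ∉ occ.image Nat.cast)) =
        some (s - p) := by
    refine List.find?_range'_eq_some_iff.2 ⟨Nat.zero_le _, by omega, ?_, fun j _ hj => ?_⟩
    · rwa [Nat.add_sub_cancel' hps, decide_eq_true_eq, natCast_mem_image_natCast_iff hocc hsN]
    · rw [decide_eq_false_iff_not, not_not,
        natCast_mem_image_natCast_iff hocc (show p + j ≤ N by omega)]
      exact hgap (p + j) (by omega) (by omega)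
  rw [circSpot, List.find?_map, List.range_eq_range']
  simp only [Function.comp_def, hcast, hfind, Option.map_some, Nat.add_sub_cancel' hps]

lemma exists_circPark_natCast_of_classicalPark {N : ℕ} :
    ∀ {L : List ℕ} {occ : Finset ℕ}, (∀ p ∈ L, 1 ≤ p) → occ ⊆ Icc 1 N →
      (classicalPark N L occ).isSome →
      ∃ r, circPark (N + 1) (L.map Nat.cast) (occ.image Nat.cast) = some r ∧
        (0 : ZMod (N + 1)) ∉ r
  | [], occ, _, hocc, _ => by
    refine ⟨occ.image Nat.cast, rfl, fun h0 => ?_⟩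
    rw [← Nat.cast_zero, natCast_mem_image_natCast_iff (hocc.trans Icc_subset_Iic_self)
      (Nat.zero_le N)] at h0
    simpa using hocc h0
  | p :: L, occ, hL, hocc, hpark => by
    rw [classicalPark] at hpark
    obtain ⟨s, hs⟩ : ∃ s, forwardSpot N occ p = some s := by
      cases h : forwardSpot N occ p
      · simp [h] at hpark
      · exact ⟨_, rfl⟩
    rw [hs] at hpark
    obtain ⟨hps, hsN, -, -⟩ := forwardSpot_eq_some_iff.1 hs
    have hp := hL p List.mem_cons_self
    obtain ⟨r, hr, h0⟩ := exists_circPark_natCast_of_classicalPark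
      (fun q hq => hL q (List.mem_cons_of_mem _ hq))
      (insert_subset (mem_Icc.2 ⟨by omega, hsN⟩) hocc) hpark
    refine ⟨r, ?_, h0⟩
    rw [List.map_cons, circPark,
      circSpot_natCast_of_forwardSpot (hocc.trans Icc_subset_Iic_self) hs, ← hr, image_insert]

theorem card_PFset_le (m N : ℕ) (hm : m ≤ N + 1) :
    #(PFset m N) ≤ (N + 1 - m) * (N + 1) ^ (m - 1) := by
  have hcirc : #(PFset m N) ≤ #(zeroFreeCircSet m (N + 1)) := by
    refine card_le_card_of_injOn (fun a i => (((a i : ℕ) + 1 : ℕ) : ZMod (N + 1))) ?_ ?_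
    · intro a ha
      simp only [PFset, coe_filter, mem_univ, true_and, Set.mem_ofPred_eq] at ha
      have := exists_circPark_natCast_of_classicalPark
        (fun p hp => (mem_Icc.1 (mem_Icc_of_mem_prefList hp)).1) (empty_subset _) ha
      simpa [zeroFreeCircSet, prefList_eq_ofFn, List.map_ofFn, Function.comp_def] using this
    · intro a _ b _ hab
      funext i
      have := CharP.natCast_injOn_Iio (ZMod (N + 1)) (N + 1) (Set.mem_Iio.2 (by omega))
        (Set.mem_Iio.2 (by omega)) (congrFun hab i)
      exact Fin.ext (by omega)
  have hcount := card_mul_card_zeroFreeCircSet (M := N + 1) hm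
  have hpow : (N + 1) ^ m ≤ (N + 1) * (N + 1) ^ (m - 1) := by
    rw [← pow_succ']
    exact Nat.pow_le_pow_right (Nat.succ_pos N) (by omega)
  refine hcirc.trans (Nat.le_of_mul_le_mul_left ?_ (Nat.succ_pos N))
  calc (N + 1) * #(zeroFreeCircSet m (N + 1)) = (N + 1 - m) * (N + 1) ^ m := hcount
    _ ≤ (N + 1 - m) * ((N + 1) * (N + 1) ^ (m - 1)) := Nat.mul_le_mul_left _ hpow
    _ = (N + 1) * ((N + 1 - m) * (N + 1) ^ (m - 1)) := by ring

lemma classicalPark_isSome_of_nodup {N : ℕ} :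
    ∀ {L : List ℕ} {occ : Finset ℕ}, L.Nodup → (∀ p ∈ L, p ≤ N ∧ p ∉ occ) →
      (classicalPark N L occ).isSome
  | [], _, _, _ => rfl
  | p :: L, occ, hnd, hL => by
    obtain ⟨hpN, hp⟩ := hL p List.mem_cons_self
    obtain ⟨hpL, hnd⟩ := List.nodup_cons.1 hnd
    rw [classicalPark, forwardSpot_eq_some_iff.2 ⟨le_rfl, hpN, hp, fun y h1 h2 => by omega⟩]
    refine classicalPark_isSome_of_nodup hnd fun q hq => ?_
    obtain ⟨hqN, hq'⟩ := hL q (List.mem_cons_of_mem _ hq)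
    exact ⟨hqN, by rw [mem_insert, not_or]; exact ⟨by rintro rfl; exact hpL hq, hq'⟩⟩

lemma mem_PFset_of_injective {m n : ℕ} {a : Fin m → Fin n} (ha : Function.Injective a) :
    a ∈ PFset m n := by
  simp only [PFset, mem_filter, mem_univ, true_and]
  refine classicalPark_isSome_of_nodup ?_ fun p hp =>
    ⟨(mem_Icc.1 (mem_Icc_of_mem_prefList hp)).2, notMem_empty p⟩
  rw [prefList_eq_ofFn, List.nodup_ofFn]
  exact fun i j h => ha (Fin.ext (by simpa using h))

theorem naples_upper_bound_general (n k : ℕ) (hn : 1 ≤ n) :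
    (NPFset n n k).card ≤ (k + 1) * (k + n + 1) ^ (n - 1) ∧
      ((NPFset n n k).card = (k + 1) * (k + n + 1) ^ (n - 1) → k = 0) := by
  set e := (Fin.castLEEmb (Nat.le_add_right n k)).arrowCongrRight (γ := Fin n)
  have hsub : (NPFset n n k).map e ⊆ PFset n (n + k) := map_castLE_NPFset_subset_PFset n n k
  have hPF : #(PFset n (n + k)) ≤ (k + 1) * (k + n + 1) ^ (n - 1) := by
    have := card_PFset_le n (n + k) (by omega)
    rwa [show n + k + 1 - n = k + 1 by omega, show n + k + 1 = k + n + 1 by omega] at this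
  refine ⟨(card_map e).symm.le.trans ((card_le_card hsub).trans hPF), fun heq => ?_⟩
  by_contra hk
  have hshift : (fun i => Fin.addNat i k) ∉ (NPFset n n k).map e := by
    intro hmem
    obtain ⟨a, -, ha⟩ := mem_map.1 hmem
    have := congrArg Fin.val (congrFun ha ⟨n - 1, by omega⟩)
    simp only [e, Function.Embedding.arrowCongrRight_apply, Fin.coe_castLEEmb, Function.comp_apply,
      Fin.val_castLE, Fin.addNat_mk] at this
    omega
  have hlt := card_lt_card ((ssubset_iff_of_subset hsub).2
    ⟨_, mem_PFset_of_injective (Fin.addNatEmb k).injective, hshift⟩)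
  rw [card_map] at hlt
  omega

theorem naples_upper_bound (n k : ℕ) (hn : 1 ≤ n) (hk : k ≤ n - 1) :
    (NPFset n n k).card ≤ (k + 1) * (k + n + 1) ^ (n - 1) ∧
      ((NPFset n n k).card = (k + 1) * (k + n + 1) ^ (n - 1) → k = 0) :=
  naples_upper_bound_general n k hn
end
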